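/- Let L ∈ (0,1) and b(a) = √2·erf⁻¹(2L + erf((√2/2)a)). The function a ↦ P(a) = (2π)^{-1/2}(e^{-a²/2} + e^{-b(a)²/2}) is strictly increasing on (−∞, −√2·erf⁻¹(L)) and strictly decreasing on (−√2·erf⁻¹(L), √2·erf⁻¹(1−2L)). -/

import Mathlib

open Real

/-- The error function `erf(x) = (2/√π)∫₀ˣ e^{-t²} dt`. -/
noncomputable def erf (x : ℝ) : ℝ :=
  2 / Real.sqrt Real.pi * ∫ t in (0:ℝ)..x, Real.exp (-t ^ 2)

/-!
With `x = a/√2`, an interval `(x₁, y₁)` of fixed erf-mass is moved to `(x₂, y₂)`, `x₁ < x₂`, by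
cutting off a piece `[x₁, x₂]` and adding a piece `[y₁, y₂]` of the same mass
`M = ∫ e^{-t²}`. Since `(e^{-t²})' = -2t e^{-t²}`, the endpoint densities change by
`e^{-x₁²} - e^{-x₂²} ∈ [2x₁M, 2x₂M]` and `e^{-y₁²} - e^{-y₂²} ∈ [2y₁M, 2y₂M]`, so the perimeter
grows when `x₂ + y₂ < 0` and shrinks when `x₁ + y₁ > 0`. By symmetry of `erf`, `x + y < 0`
exactly when `erf x < -L`, i.e. when `a < a₀`.
-/

namespace GaussianPerimeter

open intervalIntegral

lemma continuous_exp_neg_sq : Continuous fun t : ℝ => exp (-t ^ 2) := by fun_prop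

lemma integral_exp_neg_sq_pos {x y : ℝ} (h : x < y) : 0 < ∫ t in x..y, exp (-t ^ 2) :=
  intervalIntegral_pos_of_pos_on (continuous_exp_neg_sq.intervalIntegrable x y)
    (fun _ _ => exp_pos _) h

lemma erf_sub_erf (x y : ℝ) :
    erf y - erf x = 2 / √π * ∫ t in x..y, exp (-t ^ 2) := by
  rw [erf, erf, ← mul_sub, integral_interval_sub_left (continuous_exp_neg_sq.intervalIntegrable _ _)
    (continuous_exp_neg_sq.intervalIntegrable _ _)]

lemma erf_strictMono : StrictMono erf := fun x y hxy =>
  sub_pos.1 <| (erf_sub_erf x y).symm ▸ mul_pos (by positivity) (integral_exp_neg_sq_pos hxy)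

lemma erf_neg (x : ℝ) : erf (-x) = -erf x := by
  have h := integral_comp_neg (a := 0) (b := x) fun t => exp (-t ^ 2)
  simp only [neg_sq, neg_zero] at h
  rw [erf, erf, ← mul_neg, integral_symm, h]

lemma exp_neg_sq_sub_exp_neg_sq (x y : ℝ) :
    exp (-x ^ 2) - exp (-y ^ 2) = ∫ t in x..y, 2 * t * exp (-t ^ 2) := by
  have hderiv (t : ℝ) : HasDerivAt (fun s => -exp (-s ^ 2)) (2 * t * exp (-t ^ 2)) t :=
    (hasDerivAt_pow 2 t).fun_neg.exp.fun_neg.congr_deriv (by push_cast; ring)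
  rw [integral_eq_sub_of_hasDerivAt (fun t _ => hderiv t)
    (Continuous.intervalIntegrable (by fun_prop) _ _)]
  ring

lemma mul_integral_le_exp_neg_sq_sub {x y : ℝ} (hxy : x ≤ y) :
    2 * x * ∫ t in x..y, exp (-t ^ 2) ≤ exp (-x ^ 2) - exp (-y ^ 2) := by
  rw [exp_neg_sq_sub_exp_neg_sq, ← integral_const_mul]
  refine integral_mono_on hxy (Continuous.intervalIntegrable (by fun_prop) _ _)
    (Continuous.intervalIntegrable (by fun_prop) _ _) fun t ht => ?_
  have := exp_pos (-t ^ 2)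
  nlinarith [ht.1]

lemma exp_neg_sq_sub_le_mul_integral {x y : ℝ} (hxy : x ≤ y) :
    exp (-x ^ 2) - exp (-y ^ 2) ≤ 2 * y * ∫ t in x..y, exp (-t ^ 2) := by
  rw [exp_neg_sq_sub_exp_neg_sq, ← integral_const_mul]
  refine integral_mono_on hxy (Continuous.intervalIntegrable (by fun_prop) _ _)
    (Continuous.intervalIntegrable (by fun_prop) _ _) fun t ht => ?_
  have := exp_pos (-t ^ 2)
  nlinarith [ht.2]

section FixedMass

variable {k x₁ x₂ y₁ y₂ : ℝ}

lemma integral_eq_of_erf_eq (h₁ : erf y₁ = k + erf x₁) (h₂ : erf y₂ = k + erf x₂) :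
    ∫ t in x₁..x₂, exp (-t ^ 2) = ∫ t in y₁..y₂, exp (-t ^ 2) := by
  have hsub : erf x₂ - erf x₁ = erf y₂ - erf y₁ := by rw [h₁, h₂]; ring
  rw [erf_sub_erf, erf_sub_erf] at hsub
  exact mul_left_cancel₀ (by positivity) hsub

lemma lt_of_erf_eq (h₁ : erf y₁ = k + erf x₁) (h₂ : erf y₂ = k + erf x₂) (hx : x₁ < x₂) :
    y₁ < y₂ :=
  erf_strictMono.lt_iff_lt.1 <| by linarith [erf_strictMono hx]

lemma exp_neg_sq_add_lt_of_add_neg (h₁ : erf y₁ = k + erf x₁) (h₂ : erf y₂ = k + erf x₂)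
    (hx : x₁ < x₂) (hneg : x₂ + y₂ < 0) :
    exp (-x₁ ^ 2) + exp (-y₁ ^ 2) < exp (-x₂ ^ 2) + exp (-y₂ ^ 2) := by
  have hM := integral_exp_neg_sq_pos hx
  have hx' := exp_neg_sq_sub_le_mul_integral hx.le
  have hy' := exp_neg_sq_sub_le_mul_integral (lt_of_erf_eq h₁ h₂ hx).le
  rw [← integral_eq_of_erf_eq h₁ h₂] at hy'
  nlinarith

lemma exp_neg_sq_add_lt_of_add_pos (h₁ : erf y₁ = k + erf x₁) (h₂ : erf y₂ = k + erf x₂)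
    (hx : x₁ < x₂) (hpos : 0 < x₁ + y₁) :
    exp (-x₂ ^ 2) + exp (-y₂ ^ 2) < exp (-x₁ ^ 2) + exp (-y₁ ^ 2) := by
  have hM := integral_exp_neg_sq_pos hx
  have hx' := mul_integral_le_exp_neg_sq_sub hx.le
  have hy' := mul_integral_le_exp_neg_sq_sub (lt_of_erf_eq h₁ h₂ hx).le
  rw [← integral_eq_of_erf_eq h₁ h₂] at hy'
  nlinarith

end FixedMass

lemma add_neg_iff_erf_lt {L x y : ℝ} (h : erf y = 2 * L + erf x) : x + y < 0 ↔ erf x < -L := by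
  rw [← lt_neg_iff_add_neg', ← erf_strictMono.lt_iff_lt, erf_neg, h]
  constructor <;> intro <;> linarith

lemma add_pos_iff_lt_erf {L x y : ℝ} (h : erf y = 2 * L + erf x) : 0 < x + y ↔ -L < erf x := by
  rw [← neg_lt_iff_pos_add, ← erf_strictMono.lt_iff_lt, erf_neg, h]
  constructor <;> intro <;> linarith

lemma sqrt_two_div_two_mul (a : ℝ) : √2 / 2 * a = a / √2 := by
  rw [sqrt_div_self', one_div_mul_eq_div]

lemma exp_neg_sq_div_two (a : ℝ) : exp (-a ^ 2 / 2) = exp (-(a / √2) ^ 2) := by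
  rw [div_pow, sq_sqrt zero_le_two, neg_div]

end GaussianPerimeter

open GaussianPerimeter in
theorem gaussian_perimeter_monotone_general (L a₀ c : ℝ)
    (ha₀ : erf (a₀ / Real.sqrt 2) = -L) :
    (∀ a₁ b₁ a₂ b₂ : ℝ,
      erf (b₁ / Real.sqrt 2) = 2 * L + erf (Real.sqrt 2 / 2 * a₁) →
      erf (b₂ / Real.sqrt 2) = 2 * L + erf (Real.sqrt 2 / 2 * a₂) →
      a₁ < a₂ → a₂ < a₀ →
        (2 * Real.pi) ^ (-(1:ℝ)/2) * (Real.exp (-a₁ ^ 2 / 2) + Real.exp (-b₁ ^ 2 / 2)) <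
          (2 * Real.pi) ^ (-(1:ℝ)/2) * (Real.exp (-a₂ ^ 2 / 2) + Real.exp (-b₂ ^ 2 / 2))) ∧
    (∀ a₁ b₁ a₂ b₂ : ℝ,
      erf (b₁ / Real.sqrt 2) = 2 * L + erf (Real.sqrt 2 / 2 * a₁) →
      erf (b₂ / Real.sqrt 2) = 2 * L + erf (Real.sqrt 2 / 2 * a₂) →
      a₀ < a₁ → a₁ < a₂ → a₂ < c →
        (2 * Real.pi) ^ (-(1:ℝ)/2) * (Real.exp (-a₂ ^ 2 / 2) + Real.exp (-b₂ ^ 2 / 2)) <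
          (2 * Real.pi) ^ (-(1:ℝ)/2) * (Real.exp (-a₁ ^ 2 / 2) + Real.exp (-b₁ ^ 2 / 2))) := by
  have hp : 0 < (2 * π) ^ (-(1:ℝ)/2) := by positivity
  simp only [sqrt_two_div_two_mul, exp_neg_sq_div_two]
  refine ⟨fun a₁ b₁ a₂ b₂ hb₁ hb₂ h12 h20 => mul_lt_mul_of_pos_left ?_ hp,
    fun a₁ b₁ a₂ b₂ hb₁ hb₂ h01 h12 _ => mul_lt_mul_of_pos_left ?_ hp⟩
  · exact exp_neg_sq_add_lt_of_add_neg hb₁ hb₂ (by gcongr)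
      ((add_neg_iff_erf_lt hb₂).2 (ha₀ ▸ erf_strictMono (by gcongr)))
  · exact exp_neg_sq_add_lt_of_add_pos hb₁ hb₂ (by gcongr)
      ((add_pos_iff_lt_erf hb₁).2 (ha₀ ▸ erf_strictMono (by gcongr)))

/-- For intervals `(a, b(a))` of fixed Gaussian measure `L ∈ (0,1)`
(encoded by `erf(b/√2) = 2L + erf((√2/2)a)`), the Gaussian perimeter
`P(a) = (2π)^{-1/2}(e^{-a²/2} + e^{-b(a)²/2})` is strictly increasing on
`(−∞, −√2 erf⁻¹(L))` and strictly decreasing on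
`(−√2 erf⁻¹(L), √2 erf⁻¹(1−2L))`.  Here `a₀ = −√2 erf⁻¹(L)` is encoded by
`erf(a₀/√2) = −L` and `c = √2 erf⁻¹(1−2L)` by `erf(c/√2) = 1 − 2L`. -/
theorem gaussian_perimeter_monotone (L a₀ c : ℝ) (hL0 : 0 < L) (hL1 : L < 1)
    (ha₀ : erf (a₀ / Real.sqrt 2) = -L) (hc : erf (c / Real.sqrt 2) = 1 - 2 * L) :
    (∀ a₁ b₁ a₂ b₂ : ℝ,
      erf (b₁ / Real.sqrt 2) = 2 * L + erf (Real.sqrt 2 / 2 * a₁) →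
      erf (b₂ / Real.sqrt 2) = 2 * L + erf (Real.sqrt 2 / 2 * a₂) →
      a₁ < a₂ → a₂ < a₀ →
        (2 * Real.pi) ^ (-(1:ℝ)/2) * (Real.exp (-a₁ ^ 2 / 2) + Real.exp (-b₁ ^ 2 / 2)) <
          (2 * Real.pi) ^ (-(1:ℝ)/2) * (Real.exp (-a₂ ^ 2 / 2) + Real.exp (-b₂ ^ 2 / 2))) ∧
    (∀ a₁ b₁ a₂ b₂ : ℝ,
      erf (b₁ / Real.sqrt 2) = 2 * L + erf (Real.sqrt 2 / 2 * a₁) →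
      erf (b₂ / Real.sqrt 2) = 2 * L + erf (Real.sqrt 2 / 2 * a₂) →
      a₀ < a₁ → a₁ < a₂ → a₂ < c →
        (2 * Real.pi) ^ (-(1:ℝ)/2) * (Real.exp (-a₂ ^ 2 / 2) + Real.exp (-b₂ ^ 2 / 2)) <
          (2 * Real.pi) ^ (-(1:ℝ)/2) * (Real.exp (-a₁ ^ 2 / 2) + Real.exp (-b₁ ^ 2 / 2))) :=
  gaussian_perimeter_monotone_general L a₀ c ha₀
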